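/- arXiv:0704.1466 — 2 statements merged into one kernel-verified Lean document; each statement's English description precedes it below -/
import Mathlib

section
/- In the Gaussian location model, if θ̂_n satisfies P_{n,0}(θ̂_n = 0) → 1, then for any fixed ρ > 0, liminf_{n→∞} sup_{|θ| < ρ/√n} E_{n,θ}[n(θ̂_n − θ)²] ≥ ρ². -/
/-!
On the event `θ̂_n = 0` the loss at `θ` is `nθ²`, so the risk at `θ_n = s/√n` is at least
`s² · P_{n,θ_n}(θ̂_n = 0)`. The likelihood ratio of `P_{n,θ}` to `P_{n,0}` is
`∏ᵢ exp(θ yᵢ - θ²/2)`, with second moment `exp(nθ²)` under `P_{n,0}`; by Cauchy–Schwarz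
`P_{n,θ}(B) ≤ exp(nθ²/2) P_{n,0}(B)^{1/2}`, so along `θ_n = s/√n` events negligible under
`P_{n,0}` stay negligible. Hence the liminf is at least `s²` for every `|s| < ρ`.
-/

open MeasureTheory ProbabilityTheory Filter Topology

/-- Joint law of a sample of size `n` of i.i.d. `N(θ,1)` observations. -/
noncomputable def gaussP (n : ℕ) (θ : ℝ) : Measure (Fin n → ℝ) :=
  Measure.pi fun _ => gaussianReal θ 1

open scoped ENNReal

namespace MeasureTheory

section Pi

variable {ι : Type*} [Fintype ι] {X : ι → Type*} [∀ i, MeasurableSpace (X i)]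

theorem lintegral_pi_prod (μ : ∀ i, Measure (X i)) [∀ i, IsProbabilityMeasure (μ i)]
    {f : ∀ i, X i → ℝ≥0∞} (hf : ∀ i, Measurable (f i)) :
    ∫⁻ y, ∏ i, f i (y i) ∂Measure.pi μ = ∏ i, ∫⁻ x, f i x ∂μ i := by
  rw [lintegral_prod_eq_prod_lintegral_of_indepFun _ _
    (iIndepFun_pi fun i => (hf i).aemeasurable) fun i => (hf i).comp (measurable_pi_apply i)]
  exact Finset.prod_congr rfl fun i _ => (measurePreserving_eval μ i).lintegral_comp (hf i)

theorem Measure.pi_withDensity (μ : ∀ i, Measure (X i)) [∀ i, IsProbabilityMeasure (μ i)]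
    {f : ∀ i, X i → ℝ≥0∞} (hf : ∀ i, Measurable (f i))
    [∀ i, SigmaFinite ((μ i).withDensity (f i))] :
    Measure.pi (fun i => (μ i).withDensity (f i))
      = (Measure.pi μ).withDensity (fun y => ∏ i, f i (y i)) := by
  refine Measure.pi_eq fun s hs => ?_
  have hind : (Set.univ.pi s).indicator (fun y => ∏ i, f i (y i))
      = fun y => ∏ i, (s i).indicator (f i) (y i) := by
    ext y
    simp only [Set.indicator, Finset.prod_ite_zero]
    split_ifs <;> simp_all
  rw [withDensity_apply _ (.univ_pi hs), ← lintegral_indicator (.univ_pi hs), hind,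
    lintegral_pi_prod μ fun i => (hf i).indicator (hs i)]
  exact Finset.prod_congr rfl fun i _ => by
    rw [lintegral_indicator (hs i), withDensity_apply _ (hs i)]

end Pi

theorem withDensity_apply_le_sqrt_mul_sqrt {α : Type*} [MeasurableSpace α] (μ : Measure α)
    {L : α → ℝ≥0∞} (hL : AEMeasurable L μ) {B : Set α} (hB : MeasurableSet B) :
    μ.withDensity L B ≤ (∫⁻ x, L x ^ 2 ∂μ) ^ (1 / 2 : ℝ) * μ B ^ (1 / 2 : ℝ) := by
  have hCS := ENNReal.lintegral_mul_le_Lp_mul_Lq (μ.restrict B) Real.HolderConjugate.two_two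
    hL.restrict (aemeasurable_const (b := 1))
  simp only [Pi.mul_apply, mul_one, one_pow, one_mul, lintegral_const, Measure.restrict_apply_univ,
    ENNReal.rpow_two] at hCS
  rw [withDensity_apply _ hB]
  refine hCS.trans ?_
  gcongr
  exact Measure.restrict_le_self

theorem tendsto_measure_compl_nhds_zero_iff {ι : Type*} {Ω : ι → Type*}
    [∀ i, MeasurableSpace (Ω i)] {μ : ∀ i, Measure (Ω i)} [∀ i, IsProbabilityMeasure (μ i)]
    {A : ∀ i, Set (Ω i)} (hA : ∀ i, MeasurableSet (A i)) {l : Filter ι} :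
    Tendsto (fun i => μ i (A i)ᶜ) l (𝓝 0) ↔ Tendsto (fun i => μ i (A i)) l (𝓝 1) := by
  simp_rw [prob_compl_eq_one_sub (hA _)]
  constructor
  · intro h
    simpa only [ENNReal.sub_sub_cancel ENNReal.one_ne_top prob_le_one, tsub_zero] using
      ENNReal.Tendsto.sub tendsto_const_nhds h (.inl ENNReal.one_ne_top)
  · intro h
    simpa using ENNReal.Tendsto.sub tendsto_const_nhds h (.inl ENNReal.one_ne_top)

theorem ofReal_mul_sq_mul_measure_le_lintegral {Ω : Type*} [MeasurableSpace Ω] (μ : Measure Ω)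
    {f : Ω → ℝ} (hf : Measurable f) (c θ : ℝ) :
    ENNReal.ofReal (c * θ ^ 2) * μ {y | f y = 0}
      ≤ ∫⁻ y, ENNReal.ofReal (c * (f y - θ) ^ 2) ∂μ := by
  refine le_trans ?_ (mul_meas_ge_le_lintegral₀ (by fun_prop) (ENNReal.ofReal (c * θ ^ 2)))
  gcongr with y
  intro hy
  rw [hy, zero_sub, neg_sq]

end MeasureTheory

noncomputable def gaussianLikelihoodRatio (θ x : ℝ) : ℝ≥0∞ :=
  ENNReal.ofReal (Real.exp (θ * x - θ ^ 2 / 2))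

theorem measurable_gaussianLikelihoodRatio (θ : ℝ) : Measurable (gaussianLikelihoodRatio θ) := by
  unfold gaussianLikelihoodRatio; fun_prop

theorem gaussianReal_eq_withDensity_likelihoodRatio (θ : ℝ) :
    gaussianReal θ 1 = (gaussianReal 0 1).withDensity (gaussianLikelihoodRatio θ) := by
  rw [gaussianReal_of_var_ne_zero _ one_ne_zero, gaussianReal_of_var_ne_zero _ one_ne_zero,
    ← withDensity_mul _ (measurable_gaussianPDF 0 1) (measurable_gaussianLikelihoodRatio θ)]
  congr 1
  ext x
  rw [Pi.mul_apply, gaussianPDF, gaussianPDF, gaussianLikelihoodRatio,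
    ← ENNReal.ofReal_mul (gaussianPDFReal_nonneg _ _ _), gaussianPDFReal, gaussianPDFReal,
    NNReal.coe_one, mul_assoc _ (Real.exp _), ← Real.exp_add]
  congr 3
  ring

theorem gaussianLikelihoodRatio_sq (θ x : ℝ) :
    gaussianLikelihoodRatio θ x ^ 2
      = ENNReal.ofReal (Real.exp (θ ^ 2)) * gaussianLikelihoodRatio (2 * θ) x := by
  rw [gaussianLikelihoodRatio, gaussianLikelihoodRatio, ← ENNReal.ofReal_pow (Real.exp_nonneg _),
    ← ENNReal.ofReal_mul (Real.exp_nonneg _), ← Real.exp_nat_mul, ← Real.exp_add]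
  congr 2
  ring

theorem lintegral_gaussianLikelihoodRatio_sq (θ : ℝ) :
    ∫⁻ x, gaussianLikelihoodRatio θ x ^ 2 ∂gaussianReal 0 1
      = ENNReal.ofReal (Real.exp (θ ^ 2)) := by
  simp_rw [gaussianLikelihoodRatio_sq]
  rw [lintegral_const_mul _ (measurable_gaussianLikelihoodRatio _), ← setLIntegral_univ,
    ← withDensity_apply _ .univ, ← gaussianReal_eq_withDensity_likelihoodRatio, measure_univ,
    mul_one]

instance (n : ℕ) (θ : ℝ) : IsProbabilityMeasure (gaussP n θ) := by
  unfold gaussP; infer_instance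

theorem gaussP_eq_withDensity (n : ℕ) (θ : ℝ) :
    gaussP n θ = (gaussP n 0).withDensity fun y => ∏ i, gaussianLikelihoodRatio θ (y i) := by
  have : SigmaFinite ((gaussianReal 0 1).withDensity (gaussianLikelihoodRatio θ)) := by
    rw [← gaussianReal_eq_withDensity_likelihoodRatio]; infer_instance
  rw [gaussP, gaussP, ← Measure.pi_withDensity _ fun _ => measurable_gaussianLikelihoodRatio θ,
    ← gaussianReal_eq_withDensity_likelihoodRatio]

theorem lintegral_prod_gaussianLikelihoodRatio_sq (n : ℕ) (θ : ℝ) :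
    ∫⁻ y, (∏ i, gaussianLikelihoodRatio θ (y i)) ^ 2 ∂gaussP n 0
      = ENNReal.ofReal (Real.exp (n * θ ^ 2)) := by
  simp_rw [← Finset.prod_pow]
  rw [gaussP, lintegral_pi_prod _ fun _ => (measurable_gaussianLikelihoodRatio θ).pow_const 2]
  simp_rw [lintegral_gaussianLikelihoodRatio_sq]
  rw [Finset.prod_const, Finset.card_univ, Fintype.card_fin,
    ← ENNReal.ofReal_pow (Real.exp_nonneg _), ← Real.exp_nat_mul]

theorem gaussP_apply_le (n : ℕ) (θ : ℝ) {B : Set (Fin n → ℝ)} (hB : MeasurableSet B) :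
    gaussP n θ B
      ≤ ENNReal.ofReal (Real.exp (n * θ ^ 2)) ^ (1 / 2 : ℝ) * gaussP n 0 B ^ (1 / 2 : ℝ) := by
  rw [gaussP_eq_withDensity n θ, ← lintegral_prod_gaussianLikelihoodRatio_sq]
  exact withDensity_apply_le_sqrt_mul_sqrt _ (Finset.measurable_prod _ fun i _ =>
    (measurable_gaussianLikelihoodRatio θ).comp (measurable_pi_apply i)).aemeasurable hB

theorem tendsto_gaussP_nhds_one {A : ∀ n, Set (Fin n → ℝ)} (hA : ∀ n, MeasurableSet (A n))
    {θ : ℕ → ℝ} {C : ℝ} (hθ : ∀ n, n * θ n ^ 2 ≤ C)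
    (h : Tendsto (fun n => gaussP n 0 (A n)) atTop (𝓝 1)) :
    Tendsto (fun n => gaussP n (θ n) (A n)) atTop (𝓝 1) := by
  rw [← tendsto_measure_compl_nhds_zero_iff hA] at h ⊢
  have hbound (n : ℕ) : gaussP n (θ n) (A n)ᶜ
      ≤ ENNReal.ofReal (Real.exp C) ^ (1 / 2 : ℝ) * gaussP n 0 (A n)ᶜ ^ (1 / 2 : ℝ) := by
    refine (gaussP_apply_le n (θ n) (hA n).compl).trans ?_
    gcongr
    exact hθ n
  have hlim : Tendsto (fun n => ENNReal.ofReal (Real.exp C) ^ (1 / 2 : ℝ)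
      * gaussP n 0 (A n)ᶜ ^ (1 / 2 : ℝ)) atTop (𝓝 0) := by
    have hsqrt := ((ENNReal.continuous_rpow_const (y := 1 / 2)).tendsto 0).comp h
    simpa using ENNReal.Tendsto.const_mul hsqrt (.inr (by simp))
  exact tendsto_of_tendsto_of_tendsto_of_le_of_le tendsto_const_nhds hlim (fun _ => zero_le) hbound

noncomputable def localMaxRisk (est : (n : ℕ) → (Fin n → ℝ) → ℝ) (ρ : ℝ) (n : ℕ) : ℝ≥0∞ :=
  ⨆ θ : ℝ, ⨆ _ : |θ| < ρ / Real.sqrt n,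
    ∫⁻ y, ENNReal.ofReal ((n : ℝ) * (est n y - θ) ^ 2) ∂(gaussP n θ)

theorem ofReal_sq_le_liminf_localMaxRisk {est : (n : ℕ) → (Fin n → ℝ) → ℝ}
    (hmeas : ∀ n, Measurable (est n))
    (hsparse : Tendsto (fun n => gaussP n 0 {y | est n y = 0}) atTop (𝓝 1)) {ρ s : ℝ}
    (hs : |s| < ρ) :
    ENNReal.ofReal (s ^ 2) ≤ liminf (localMaxRisk est ρ) atTop := by
  set θ : ℕ → ℝ := fun n => s / Real.sqrt n
  have hnθ {n : ℕ} (hn : 1 ≤ n) : n * θ n ^ 2 = s ^ 2 := by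
    have : (n : ℝ) ≠ 0 := by positivity
    rw [div_pow, Real.sq_sqrt n.cast_nonneg]
    field_simp
  have hθ (n : ℕ) : n * θ n ^ 2 ≤ s ^ 2 := by
    rcases Nat.eq_zero_or_pos n with rfl | hn
    · simp [sq_nonneg]
    · exact (hnθ hn).le
  have hcontig := tendsto_gaussP_nhds_one (A := fun n => {y | est n y = 0})
    (fun n => hmeas n (measurableSet_singleton 0)) hθ hsparse
  have hrisk : ∀ᶠ n in atTop,
      ENNReal.ofReal (s ^ 2) * gaussP n (θ n) {y | est n y = 0} ≤ localMaxRisk est ρ n := by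
    filter_upwards [eventually_ge_atTop 1] with n hn
    have hsqrt : 0 < Real.sqrt n := Real.sqrt_pos.2 (by exact_mod_cast hn)
    have hθρ : |θ n| < ρ / Real.sqrt n := by
      rw [abs_div, abs_of_pos hsqrt]
      gcongr
    rw [← hnθ hn]
    exact le_iSup₂_of_le (θ n) hθρ (ofReal_mul_sq_mul_measure_le_lintegral _ (hmeas n) _ _)
  calc ENNReal.ofReal (s ^ 2)
      = liminf (fun n => ENNReal.ofReal (s ^ 2) * gaussP n (θ n) {y | est n y = 0}) atTop := by
        rw [(ENNReal.Tendsto.const_mul hcontig (.inr ENNReal.ofReal_ne_top)).liminf_eq, mul_one]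
    _ ≤ liminf (localMaxRisk est ρ) atTop := liminf_le_liminf hrisk

theorem stmt_11
    (est : (n : ℕ) → (Fin n → ℝ) → ℝ)
    (hmeas : ∀ n, Measurable (est n))
    (hsparse : Tendsto (fun n => gaussP n 0 {y | est n y = 0}) atTop (𝓝 1))
    (ρ : ℝ) (hρ : 0 < ρ) :
    ENNReal.ofReal (ρ ^ 2) ≤
      Filter.liminf (fun n : ℕ => ⨆ θ : ℝ, ⨆ _ : |θ| < ρ / Real.sqrt n,
        ∫⁻ y, ENNReal.ofReal ((n : ℝ) * (est n y - θ) ^ 2) ∂(gaussP n θ)) atTop := by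
  have hlim :
      Tendsto (fun s : ℝ => ENNReal.ofReal (s ^ 2)) (𝓝[<] ρ) (𝓝 (ENNReal.ofReal (ρ ^ 2))) :=
    ((ENNReal.continuous_ofReal.comp (continuous_pow 2)).tendsto ρ).mono_left nhdsWithin_le_nhds
  refine le_of_tendsto hlim ?_
  filter_upwards [Ioo_mem_nhdsLT (neg_lt_self hρ)] with s hs
  exact ofReal_sq_le_liminf_localMaxRisk hmeas hsparse (abs_lt.2 hs)
end

section
/- In the Gaussian location model, define the hard-thresholding estimator θ̂_n = ȳ_n·1{|ȳ_n| > c_n} with threshold c_n > 0 satisfying √n·c_n → ∞ and c_n → 0. Then θ̂_n is consistent for θ and satisfies P_{n,θ}(θ̂_n = 0) → 1 whenever θ = 0, and P_{n,θ}(θ̂_n = ȳ_n) → 1 whenever θ ≠ 0; hence sup_{θ∈ℝ} E_{n,θ}[n(θ̂_n − θ)²] → ∞. -/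
open MeasureTheory ProbabilityTheory Filter Topology

/-- The sample mean of `n` observations. -/
noncomputable def sampleMean (n : ℕ) (y : Fin n → ℝ) : ℝ := (∑ t, y t) / n

/-- The hard-thresholding estimator with threshold `c n`. -/
noncomputable def hardThresh (c : ℕ → ℝ) (n : ℕ) (y : Fin n → ℝ) : ℝ :=
  if c n < |sampleMean n y| then sampleMean n y else 0

/-! The centred sum `∑ i, (y i - θ)` is sub-Gaussian with variance proxy `n`, so
`P_θ(|ȳ_n - θ| ≥ t_n) ≤ 2 exp (-n t_n² / 2)`, which tends to `0`, uniformly in `θ`, as soon as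
`n t_n² → ∞`. Since `|θ̂_n - ȳ_n| ≤ c_n → 0`, this gives consistency, and for `θ ≠ 0` the
threshold eventually drops below `|θ| / 2`, so `θ̂_n = ȳ_n` unless `|ȳ_n - θ| ≥ |θ| / 2`.
Since `n c_n² → ∞`, the bound with `t_n = c_n / 2` shows that `θ̂_n = 0` with probability tending
to one, uniformly over the local alternatives `|θ| ≤ c_n / 2`; at `θ_n = c_n / 2` the normalised
risk is therefore at least `(n c_n² / 4) (1 - o(1)) → ∞`. -/

open Real NNReal ENNReal

namespace ProbabilityTheory

lemma hasSubgaussianMGF_sub_gaussianReal (μ : ℝ) (v : ℝ≥0) :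
    HasSubgaussianMGF (fun x => x - μ) v (gaussianReal μ v) := by
  have hmap : (gaussianReal μ v).map (· - μ) = gaussianReal 0 v := by
    rw [gaussianReal_map_sub_const, sub_self]
  rw [← HasSubgaussianMGF.id_map_iff (by fun_prop), hmap]
  exact ⟨integrable_exp_mul_gaussianReal, fun t => by simp [mgf_id_gaussianReal]⟩

lemma HasSubgaussianMGF.measure_abs_ge_le {Ω : Type*} [MeasurableSpace Ω] {μ : Measure Ω}
    [IsFiniteMeasure μ] {X : Ω → ℝ} {c : ℝ≥0} (h : HasSubgaussianMGF X c μ) {ε : ℝ}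
    (hε : 0 ≤ ε) :
    μ {ω | ε ≤ |X ω|} ≤ ENNReal.ofReal (2 * exp (-ε ^ 2 / (2 * c))) := by
  have hsplit : {ω | ε ≤ |X ω|} = {ω | ε ≤ X ω} ∪ {ω | ε ≤ (-X) ω} := by
    ext ω; simp [le_abs', or_comm, le_neg]
  calc μ {ω | ε ≤ |X ω|} ≤ μ {ω | ε ≤ X ω} + μ {ω | ε ≤ (-X) ω} :=
        hsplit ▸ measure_union_le _ _
    _ = ENNReal.ofReal (μ.real {ω | ε ≤ X ω}) + ENNReal.ofReal (μ.real {ω | ε ≤ (-X) ω}) := by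
        rw [ofReal_measureReal, ofReal_measureReal]
    _ ≤ ENNReal.ofReal (exp (-ε ^ 2 / (2 * c))) + ENNReal.ofReal (exp (-ε ^ 2 / (2 * c))) := by
        gcongr
        exacts [h.measure_ge_le hε, h.neg.measure_ge_le hε]
    _ = ENNReal.ofReal (2 * exp (-ε ^ 2 / (2 * c))) := by
        rw [← ENNReal.ofReal_add (by positivity) (by positivity)]
        ring_nf

end ProbabilityTheory

lemma tendsto_measure_of_eventually_subset {ι : Type*} {l : Filter ι} {Ω : ι → Type*}
    [∀ i, MeasurableSpace (Ω i)] {μ : ∀ i, Measure (Ω i)} {s t : ∀ i, Set (Ω i)}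
    (hst : ∀ᶠ i in l, s i ⊆ t i) (ht : Tendsto (fun i => μ i (t i)) l (𝓝 0)) :
    Tendsto (fun i => μ i (s i)) l (𝓝 0) :=
  tendsto_of_tendsto_of_tendsto_of_le_of_le' tendsto_const_nhds ht
    (Eventually.of_forall fun _ => zero_le) (hst.mono fun _ h => measure_mono h)

lemma tendsto_measure_one_of_compl {ι : Type*} {l : Filter ι} {Ω : ι → Type*}
    [∀ i, MeasurableSpace (Ω i)] {μ : ∀ i, Measure (Ω i)} [∀ i, IsProbabilityMeasure (μ i)]
    {s : ∀ i, Set (Ω i)} (h : Tendsto (fun i => μ i (s i)ᶜ) l (𝓝 0)) :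
    Tendsto (fun i => μ i (s i)) l (𝓝 1) := by
  have hle (i : ι) : 1 - μ i (s i)ᶜ ≤ μ i (s i) := by
    rw [tsub_le_iff_right, ← measure_univ (μ := μ i), ← Set.union_compl_self (s i)]
    exact measure_union_le _ _
  have hone : Tendsto (fun i => 1 - μ i (s i)ᶜ) l (𝓝 1) := by
    simpa using ENNReal.Tendsto.sub tendsto_const_nhds h (Or.inl one_ne_top)
  exact tendsto_of_tendsto_of_tendsto_of_le_of_le hone tendsto_const_nhds hle fun _ => prob_le_one

instance isProbabilityMeasure_gaussP (n : ℕ) (θ : ℝ) : IsProbabilityMeasure (gaussP n θ) := by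
  unfold gaussP; infer_instance

lemma hasSubgaussianMGF_sum_sub_gaussP (n : ℕ) (θ : ℝ) :
    HasSubgaussianMGF (fun y => ∑ i, (y i - θ)) n (gaussP n θ) := by
  have hcoord (i : Fin n) : HasSubgaussianMGF (fun y : Fin n → ℝ => y i - θ) 1 (gaussP n θ) := by
    refine HasSubgaussianMGF.of_map (X := fun x => x - θ) (measurable_pi_apply i).aemeasurable ?_
    rw [gaussP, (measurePreserving_eval _ i).map_eq]
    exact hasSubgaussianMGF_sub_gaussianReal θ 1
  have hindep : iIndepFun (fun (i : Fin n) (y : Fin n → ℝ) => y i - θ) (gaussP n θ) :=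
    iIndepFun_pi (X := fun _ x => x - θ) fun _ => by fun_prop
  simpa using HasSubgaussianMGF.sum_of_iIndepFun hindep (s := Finset.univ) fun i _ => hcoord i

lemma gaussP_abs_sampleMean_sub_ge_le {n : ℕ} (hn : n ≠ 0) (θ : ℝ) {t : ℝ} (ht : 0 ≤ t) :
    gaussP n θ {y | t ≤ |sampleMean n y - θ|}
      ≤ ENNReal.ofReal (2 * exp (-(n * t ^ 2) / 2)) := by
  have hn' : (0 : ℝ) < n := by positivity
  have hset : {y | t ≤ |sampleMean n y - θ|} = {y | n * t ≤ |∑ i, (y i - θ)|} := by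
    ext y
    simp only [Set.mem_ofPred_eq, sampleMean, Finset.sum_sub_distrib, Finset.sum_const,
      Finset.card_univ, Fintype.card_fin, nsmul_eq_mul]
    rw [← mul_le_mul_iff_of_pos_left hn', ← abs_of_pos hn', ← abs_mul, abs_of_pos hn']
    congr! 2
    field_simp
  rw [hset]
  convert (hasSubgaussianMGF_sum_sub_gaussP n θ).measure_abs_ge_le (by positivity : 0 ≤ n * t)
    using 4
  push_cast
  field_simp

lemma tendsto_gaussP_abs_sampleMean_sub_ge (θ t : ℕ → ℝ) (ht : ∀ n, 0 ≤ t n)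
    (h : Tendsto (fun n : ℕ => n * t n ^ 2) atTop atTop) :
    Tendsto (fun n => gaussP n (θ n) {y | t n ≤ |sampleMean n y - θ n|}) atTop (𝓝 0) := by
  have hexp :
      Tendsto (fun n : ℕ => ENNReal.ofReal (2 * exp (-(n * t n ^ 2) / 2))) atTop (𝓝 0) := by
    have hlim := ENNReal.tendsto_ofReal ((tendsto_exp_atBot.comp (tendsto_neg_atTop_atBot.comp
      (h.atTop_div_const two_pos))).const_mul 2)
    simpa [Function.comp_def, neg_div] using hlim
  exact tendsto_of_tendsto_of_tendsto_of_le_of_le' tendsto_const_nhds hexp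
    (Eventually.of_forall fun _ => zero_le)
    ((eventually_ne_atTop 0).mono fun n hn => gaussP_abs_sampleMean_sub_ge_le hn (θ n) (ht n))

lemma measurable_sampleMean (n : ℕ) : Measurable (sampleMean n) :=
  (Finset.measurable_sum _ fun i _ => measurable_pi_apply i).div_const _

lemma measurable_hardThresh (c : ℕ → ℝ) (n : ℕ) : Measurable (hardThresh c n) :=
  Measurable.ite (measurableSet_lt measurable_const (measurable_sampleMean n).abs)
    (measurable_sampleMean n) measurable_const

lemma lt_abs_sampleMean_of_hardThresh_ne_zero {c : ℕ → ℝ} {n : ℕ} {y : Fin n → ℝ}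
    (h : hardThresh c n y ≠ 0) : c n < |sampleMean n y| := by
  unfold hardThresh at h
  split_ifs at h with hc
  exacts [hc, absurd rfl h]

lemma abs_sampleMean_le_of_hardThresh_ne {c : ℕ → ℝ} {n : ℕ} {y : Fin n → ℝ}
    (h : hardThresh c n y ≠ sampleMean n y) : |sampleMean n y| ≤ c n := by
  unfold hardThresh at h
  split_ifs at h with hc
  exacts [absurd rfl h, not_lt.mp hc]

lemma mul_gaussP_hardThresh_eq_zero_le_lintegral (c : ℕ → ℝ) (n : ℕ) (θ : ℝ) :
    ENNReal.ofReal (n * θ ^ 2) * gaussP n θ {y | hardThresh c n y = 0}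
      ≤ ∫⁻ y, ENNReal.ofReal (n * (hardThresh c n y - θ) ^ 2) ∂(gaussP n θ) := by
  refine le_trans ?_ (mul_meas_ge_le_lintegral₀ ?_ (ENNReal.ofReal (n * θ ^ 2)))
  · refine mul_le_mul_right (measure_mono fun y (hy : hardThresh c n y = 0) => ?_) _
    simp [hy]
  · have := measurable_hardThresh c n
    fun_prop

lemma tendsto_gaussP_abs_hardThresh_sub_ge {c : ℕ → ℝ} (hc : Tendsto c atTop (𝓝 0)) (θ : ℝ)
    {ε : ℝ} (hε : 0 < ε) :
    Tendsto (fun n => gaussP n θ {y | ε ≤ |hardThresh c n y - θ|}) atTop (𝓝 0) := by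
  refine tendsto_measure_of_eventually_subset ?_ (tendsto_gaussP_abs_sampleMean_sub_ge
    (fun _ => θ) (fun _ => ε / 2) (fun _ => by positivity)
    (tendsto_natCast_atTop_atTop.atTop_mul_const (by positivity)))
  filter_upwards [hc.eventually (gt_mem_nhds (half_pos hε))] with n hn y (hy : ε ≤ _)
  show ε / 2 ≤ _
  unfold hardThresh at hy
  split_ifs at hy with h
  · linarith
  · have := abs_sub_abs_le_abs_sub θ (sampleMean n y)
    rw [zero_sub, abs_neg] at hy
    rw [abs_sub_comm]
    linarith

lemma tendsto_gaussP_hardThresh_eq_sampleMean {c : ℕ → ℝ} (hc : Tendsto c atTop (𝓝 0))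
    {θ : ℝ} (hθ : θ ≠ 0) :
    Tendsto (fun n => gaussP n θ {y | hardThresh c n y = sampleMean n y}) atTop (𝓝 1) := by
  have hθ' : 0 < |θ| / 2 := by positivity
  refine tendsto_measure_one_of_compl (tendsto_measure_of_eventually_subset ?_
    (tendsto_gaussP_abs_sampleMean_sub_ge (fun _ => θ) (fun _ => |θ| / 2) (fun _ => hθ'.le)
      (tendsto_natCast_atTop_atTop.atTop_mul_const (by positivity))))
  filter_upwards [hc.eventually (gt_mem_nhds hθ')] with n hn y hy
  have := abs_sampleMean_le_of_hardThresh_ne hy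
  have := abs_sub_abs_le_abs_sub θ (sampleMean n y)
  show |θ| / 2 ≤ _
  rw [abs_sub_comm]
  linarith

lemma tendsto_gaussP_hardThresh_eq_zero {c θ : ℕ → ℝ} (hθ : ∀ n, |θ n| ≤ c n / 2)
    (hc : Tendsto (fun n : ℕ => n * c n ^ 2) atTop atTop) :
    Tendsto (fun n => gaussP n (θ n) {y | hardThresh c n y = 0}) atTop (𝓝 1) := by
  have hc' : Tendsto (fun n : ℕ => n * (c n / 2) ^ 2) atTop atTop :=
    (hc.atTop_div_const (by norm_num : (0 : ℝ) < 4)).congr fun n => by ring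
  refine tendsto_measure_one_of_compl (tendsto_measure_of_eventually_subset
    (Eventually.of_forall fun n y hy => ?_) (tendsto_gaussP_abs_sampleMean_sub_ge θ
      (fun n => c n / 2) (fun n => (abs_nonneg _).trans (hθ n)) hc'))
  have := lt_abs_sampleMean_of_hardThresh_ne_zero hy
  have := abs_sub_abs_le_abs_sub (sampleMean n y) (θ n)
  show c n / 2 ≤ _
  linarith [hθ n]

lemma tendsto_iSup_lintegral_hardThresh_risk {c : ℕ → ℝ} (hc_nonneg : ∀ n, 0 ≤ c n)
    (hc : Tendsto (fun n : ℕ => n * c n ^ 2) atTop atTop) :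
    Tendsto (fun n : ℕ => ⨆ θ : ℝ,
        ∫⁻ y, ENNReal.ofReal ((n : ℝ) * (hardThresh c n y - θ) ^ 2) ∂(gaussP n θ))
      atTop (𝓝 ⊤) := by
  have hloss : Tendsto (fun n : ℕ => ENNReal.ofReal (n * (c n / 2) ^ 2)) atTop (𝓝 ⊤) :=
    ENNReal.tendsto_ofReal_atTop.comp
      ((hc.atTop_div_const (by norm_num : (0 : ℝ) < 4)).congr fun n => by ring)
  have hsparse := tendsto_gaussP_hardThresh_eq_zero (θ := fun n => c n / 2)
    (fun n => (abs_of_nonneg (div_nonneg (hc_nonneg n) zero_le_two)).le) hc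
  refine tendsto_nhds_top_mono ?_ (Eventually.of_forall fun n =>
    le_iSup_of_le (c n / 2) (mul_gaussP_hardThresh_eq_zero_le_lintegral c n _))
  simpa using ENNReal.Tendsto.mul hloss (Or.inr one_ne_top) hsparse (Or.inl one_ne_zero)

theorem stmt_18 (c : ℕ → ℝ) (hcpos : ∀ n, 0 < c n)
    (hc1 : Tendsto (fun n : ℕ => Real.sqrt n * c n) atTop atTop)
    (hc0 : Tendsto c atTop (𝓝 0)) :
    (∀ θ : ℝ, ∀ ε > (0 : ℝ),
      Tendsto (fun n => gaussP n θ {y | ε ≤ |hardThresh c n y - θ|}) atTop (𝓝 0)) ∧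
    (∀ θ : ℝ, θ = 0 →
      Tendsto (fun n => gaussP n θ {y | hardThresh c n y = 0}) atTop (𝓝 1)) ∧
    (∀ θ : ℝ, θ ≠ 0 →
      Tendsto (fun n => gaussP n θ {y | hardThresh c n y = sampleMean n y}) atTop (𝓝 1)) ∧
    Tendsto (fun n : ℕ => ⨆ θ : ℝ,
        ∫⁻ y, ENNReal.ofReal ((n : ℝ) * (hardThresh c n y - θ) ^ 2) ∂(gaussP n θ))
      atTop (𝓝 ⊤) := by
  have hc : Tendsto (fun n : ℕ => n * c n ^ 2) atTop atTop :=
    ((tendsto_pow_atTop two_ne_zero).comp hc1).congr fun n => by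
      simp [mul_pow, Real.sq_sqrt (Nat.cast_nonneg n)]
  refine ⟨fun θ ε hε => tendsto_gaussP_abs_hardThresh_sub_ge hc0 θ hε, fun θ hθ => ?_,
    fun θ hθ => tendsto_gaussP_hardThresh_eq_sampleMean hc0 hθ,
    tendsto_iSup_lintegral_hardThresh_risk (fun n => (hcpos n).le) hc⟩
  subst hθ
  exact tendsto_gaussP_hardThresh_eq_zero (θ := fun _ => 0)
    (fun n => by simpa using (half_pos (hcpos n)).le) hc
end
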